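/- Let Z be a finitely generated abelian group acting by isometries on a metric space X such that every element of Z acts elliptically (with bounded orbit). Then for each x₀ ∈ X the whole orbit Z·x₀ is bounded. -/
import Mathlib


/-- If a finitely generated abelian group `Z` acts by isometries on a metric space `X` and
every element acts elliptically (bounded cyclic orbit at `x₀`), then the whole orbit `Z·x₀`
is bounded. -/
theorem orbit_bounded_of_fg_abelian_all_elliptic {Z X : Type*} [CommGroup Z] [Group.FG Z]
    [MetricSpace X] [MulAction Z X] (hiso : ∀ z : Z, Isometry fun x : X => z • x)
    (x₀ : X) (hell : ∀ z : Z, ∃ C : ℝ, ∀ n : ℤ, dist (z ^ n • x₀) x₀ ≤ C) :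
    ∃ C : ℝ, ∀ z : Z, dist (z • x₀) x₀ ≤ C := by
  have key : ∀ S : Finset Z, ∃ C : ℝ, ∀ z ∈ Subgroup.closure (S : Set Z),
      dist (z • x₀) x₀ ≤ C := by
    classical
    intro S
    induction S using Finset.induction_on with
    | empty =>
      refine ⟨0, ?_⟩
      intro z hz
      simp only [Finset.coe_empty, Subgroup.closure_empty, Subgroup.mem_bot] at hz
      simp [hz]
    | @insert s S hs ih =>
      obtain ⟨C₁, hC₁⟩ := ih
      obtain ⟨C₂, hC₂⟩ := hell s
      refine ⟨C₂ + C₁, ?_⟩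
      intro z hz
      rw [Finset.coe_insert, Set.insert_eq, Subgroup.closure_union, ← Subgroup.zpowers_eq_closure] at hz
      rw [Subgroup.mem_sup] at hz
      obtain ⟨a, ha, b, hb, rfl⟩ := hz
      obtain ⟨n, rfl⟩ := Subgroup.mem_zpowers_iff.mp ha
      calc dist ((s ^ n * b) • x₀) x₀
          ≤ dist ((s ^ n * b) • x₀) (s ^ n • x₀) + dist (s ^ n • x₀) x₀ := dist_triangle _ _ _
        _ ≤ C₂ + C₁ := by
            have h1 : dist ((s ^ n * b) • x₀) (s ^ n • x₀) = dist (b • x₀) x₀ := by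
              rw [mul_smul]
              exact (hiso (s ^ n)).dist_eq _ _
            rw [h1, add_comm]
            exact add_le_add (hC₂ n) (hC₁ b hb)
  obtain ⟨S, hS⟩ := Group.FG.out (G := Z)
  obtain ⟨C, hC⟩ := key S
  exact ⟨C, fun z => hC z (hS ▸ Subgroup.mem_top z)⟩
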